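/- Let 1 → A → G → H → 1 be a central extension of groups where H is finite and G_ab ≅ ℤ and A ≅ ℤ. Then the nonabelian tensor square G ⊗ G is torsion-free if and only if either G ⊗ G is isomorphic to ℤ and H ⊗ H is cyclic, or G ⊗ G is isomorphic to ℤ ⊕ ℤ. -/

import Mathlib

/-!
Since `ker π` is central and `H` is finite, `Z(G)` has finite index, so `[G, G]` is finite by
Schur's theorem. The commutator map `κ : G ⊗ G → G`, `g ⊗ h ↦ [g, h]`, satisfies
`t s t⁻¹ = κ(t) · s`, so `ker κ` is central; hence `Z(G ⊗ G)` has finite index too, and a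
torsion-free `G ⊗ G` has finite, hence trivial, commutator subgroup. Being abelian, `G ⊗ G` is
acted on trivially by `[G, G] = κ(G ⊗ G)`, which makes `c ⊗ g` and `g ⊗ c` torsion, hence trivial,
for `c ∈ [G, G]`. Writing `φ : G → G_ab ≅ ℤ` and `φ g₀ = 1`, this gives
`g ⊗ h = (g₀ ⊗ g₀) ^ (φ g * φ h)`, so `G ⊗ G ≅ ℤ`, and `H ⊗ H` is cyclic as its image.
Conversely `ℤ` and `ℤ × ℤ` are torsion-free.
-/

universe u v w

/-- The defining relators of the nonabelian tensor square `G ⊗ G`. -/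
def tensorSquareRels (G : Type u) [Group G] : Set (FreeGroup (G × G)) :=
  {r | ∃ g h k : G,
    r = FreeGroup.of (g * h, k) *
        (FreeGroup.of (g * h * g⁻¹, g * k * g⁻¹) * FreeGroup.of (g, k))⁻¹ ∨
    r = FreeGroup.of (g, h * k) *
        (FreeGroup.of (g, h) * FreeGroup.of (h * g * h⁻¹, h * k * h⁻¹))⁻¹}

/-- The nonabelian tensor square `G ⊗ G`. -/
def TensorSquare (G : Type u) [Group G] : Type u :=
  PresentedGroup (tensorSquareRels G)

instance (G : Type u) [Group G] : Group (TensorSquare G) := by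
  unfold TensorSquare; infer_instance

/-- The generator `g ⊗ h` of the nonabelian tensor square. -/
def tmul {G : Type u} [Group G] (g h : G) : TensorSquare G :=
  PresentedGroup.of (g, h)

open scoped commutatorElement

section FiniteIndexCenter

variable {G : Type u} [Group G]

theorem commutatorElement_mul_mul_of_mem_center (x y : G) {z w : G}
    (hz : z ∈ Subgroup.center G) (hw : w ∈ Subgroup.center G) : ⁅x * z, y * w⁆ = ⁅x, y⁆ := by
  have hz' : ∀ g : G, z * g * z⁻¹ = g := fun g => by
    rw [← Subgroup.mem_center_iff.mp hz g, mul_inv_cancel_right]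
  have hw' : ∀ g : G, w * g * w⁻¹ = g := fun g => by
    rw [← Subgroup.mem_center_iff.mp hw g, mul_inv_cancel_right]
  calc ⁅x * z, y * w⁆ = x * z * y * (w * (z⁻¹ * x⁻¹) * w⁻¹) * y⁻¹ := by
        rw [commutatorElement_def]; group
    _ = x * (z * y * z⁻¹) * x⁻¹ * y⁻¹ := by rw [hw']; group
    _ = ⁅x, y⁆ := by rw [hz', commutatorElement_def]

theorem finite_commutatorSet_of_finiteIndex_center [(Subgroup.center G).FiniteIndex] :
    Finite (commutatorSet G) := by
  have : Finite (G ⧸ Subgroup.center G) := Subgroup.finite_quotient_of_finiteIndex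
  refine Set.Finite.to_subtype ((Set.finite_range
    fun p : (G ⧸ Subgroup.center G) × (G ⧸ Subgroup.center G) => ⁅p.1.out, p.2.out⁆).subset ?_)
  rintro _ ⟨g, h, rfl⟩
  obtain ⟨z, hz⟩ := QuotientGroup.mk_out_eq_mul (Subgroup.center G) g
  obtain ⟨w, hw⟩ := QuotientGroup.mk_out_eq_mul (Subgroup.center G) h
  exact ⟨(g, h), by
    simp only [hz, hw, commutatorElement_mul_mul_of_mem_center g h z.2 w.2]⟩

theorem isOfFinOrder_of_mem_commutator [(Subgroup.center G).FiniteIndex] {c : G}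
    (hc : c ∈ commutator G) : IsOfFinOrder c := by
  have := finite_commutatorSet_of_finiteIndex_center (G := G)
  exact (commutator G).subtype.isOfFinOrder (isOfFinOrder_of_finite (⟨c, hc⟩ : commutator G))

theorem mul_comm_of_finiteIndex_center [(Subgroup.center G).FiniteIndex]
    (hG : ∀ g : G, IsOfFinOrder g → g = 1) (x y : G) : x * y = y * x :=
  commutatorElement_eq_one_iff_mul_comm.mp <| hG _ <| isOfFinOrder_of_mem_commutator <|
    Subgroup.commutator_mem_commutator (Subgroup.mem_top x) (Subgroup.mem_top y)

end FiniteIndexCenter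

namespace TensorSquare

variable {G : Type u} {K : Type v} [Group G] [Group K]

theorem tmul_mul_left (g h k : G) :
    tmul (g * h) k = tmul (g * h * g⁻¹) (g * k * g⁻¹) * tmul g k :=
  (PresentedGroup.mk_eq_mk_of_mul_inv_mem (rels := tensorSquareRels G) ⟨g, h, k, .inl rfl⟩).trans
    (map_mul _ _ _)

theorem tmul_mul_right (g h k : G) :
    tmul g (h * k) = tmul g h * tmul (h * g * h⁻¹) (h * k * h⁻¹) :=
  (PresentedGroup.mk_eq_mk_of_mul_inv_mem (rels := tensorSquareRels G) ⟨g, h, k, .inr rfl⟩).trans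
    (map_mul _ _ _)

theorem tmul_one_left (k : G) : tmul 1 k = 1 := by
  simpa using tmul_mul_left (1 : G) 1 k

theorem tmul_one_right (g : G) : tmul g 1 = 1 := by
  simpa using tmul_mul_right g 1 1

section Lift

variable (f : G → G → K)
  (h₁ : ∀ g h k, f (g * h) k = f (g * h * g⁻¹) (g * k * g⁻¹) * f g k)
  (h₂ : ∀ g h k, f g (h * k) = f g h * f (h * g * h⁻¹) (h * k * h⁻¹))

def lift : TensorSquare G →* K :=
  PresentedGroup.toGroup (f := fun p : G × G => f p.1 p.2) <| by
    rintro r ⟨g, h, k, rfl | rfl⟩ <;>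
      simp only [map_mul, map_inv, FreeGroup.lift_apply_of] <;>
      [rw [h₁]; rw [h₂]] <;> exact mul_inv_cancel _

@[simp]
theorem lift_tmul (g h : G) : lift f h₁ h₂ (tmul g h) = f g h :=
  PresentedGroup.toGroup.of _

end Lift

@[ext]
theorem hom_ext {φ ψ : TensorSquare G →* K} (h : ∀ g k, φ (tmul g k) = ψ (tmul g k)) :
    φ = ψ :=
  PresentedGroup.ext fun p => h p.1 p.2

theorem mem_of_forall_tmul_mem (S : Subgroup (TensorSquare G)) (h : ∀ g k, tmul g k ∈ S)
    (t : TensorSquare G) : t ∈ S :=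
  PresentedGroup.generated_by _ S (fun p => h p.1 p.2) t

def map (f : G →* K) : TensorSquare G →* TensorSquare K :=
  lift (fun g h => tmul (f g) (f h))
    (fun g h k => by simpa only [map_mul, map_inv] using tmul_mul_left (f g) (f h) (f k))
    (fun g h k => by simpa only [map_mul, map_inv] using tmul_mul_right (f g) (f h) (f k))

@[simp]
theorem map_tmul (f : G →* K) (g h : G) : map f (tmul g h) = tmul (f g) (f h) :=
  lift_tmul _ _ _ _ _

theorem map_surjective {f : G →* K} (hf : Function.Surjective f) :
    Function.Surjective (map f) := by
  refine fun t => mem_of_forall_tmul_mem (map f).range (fun a b => ?_) t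
  obtain ⟨⟨x, rfl⟩, ⟨y, rfl⟩⟩ := And.intro (hf a) (hf b)
  exact ⟨tmul x y, map_tmul f x y⟩

def act : G →* MulAut (TensorSquare G) where
  toFun g := (map (MulAut.conj g).toMonoidHom).toMulEquiv (map (MulAut.conj g⁻¹).toMonoidHom)
    (hom_ext fun x y => by simp [mul_assoc]) (hom_ext fun x y => by simp [mul_assoc])
  map_one' := MulEquiv.toMonoidHom_injective <| hom_ext fun x y => by simp
  map_mul' g h := MulEquiv.toMonoidHom_injective <| hom_ext fun x y => by simp [mul_assoc]

@[simp]
theorem act_tmul (g x y : G) : act g (tmul x y) = tmul (g * x * g⁻¹) (g * y * g⁻¹) := by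
  simp [act]

theorem tmul_mul_left_eq_act (g h k : G) : tmul (g * h) k = act g (tmul h k) * tmul g k := by
  rw [act_tmul, tmul_mul_left]

theorem tmul_mul_right_eq_act (g h k : G) : tmul g (h * k) = tmul g h * act h (tmul g k) := by
  rw [act_tmul, tmul_mul_right]

def commutatorHom : TensorSquare G →* G :=
  lift (fun g h => ⁅g, h⁆) (fun _ _ _ => by simp only [commutatorElement_def]; group)
    (fun _ _ _ => by simp only [commutatorElement_def]; group)

@[simp]
theorem commutatorHom_tmul (g h : G) : commutatorHom (tmul g h) = ⁅g, h⁆ :=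
  lift_tmul _ _ _ _ _

theorem range_commutatorHom : (commutatorHom : TensorSquare G →* G).range = commutator G := by
  rw [commutator_eq_closure]
  refine le_antisymm ?_ ((Subgroup.closure_le _).mpr ?_)
  · rintro _ ⟨t, rfl⟩
    exact mem_of_forall_tmul_mem ((Subgroup.closure (commutatorSet G)).comap commutatorHom)
      (fun g h => Subgroup.subset_closure ⟨g, h, (commutatorHom_tmul g h).symm⟩) t
  · rintro _ ⟨g, h, rfl⟩
    exact ⟨tmul g h, commutatorHom_tmul g h⟩

/-- Expand `(a * b) ⊗ (c * d)` in the two possible orders and cancel. -/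
theorem act_mul_tmul_comm (a b c d : G) :
    act (a * c) (tmul b d) * tmul a c = tmul a c * act (c * a) (tmul b d) := by
  have h₁ := tmul_mul_left_eq_act a b (c * d)
  have h₂ := tmul_mul_right_eq_act (a * b) c d
  rw [tmul_mul_right_eq_act b c d, tmul_mul_right_eq_act a c d] at h₁
  rw [tmul_mul_left_eq_act a b c, tmul_mul_left_eq_act a b d] at h₂
  simp only [map_mul, MulAut.mul_apply] at h₁ h₂ ⊢
  have h := h₁.symm.trans h₂
  simp only [← mul_assoc, mul_left_inj] at h
  simpa only [mul_assoc, mul_right_inj] using h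

theorem conj_tmul (a c : G) : MulAut.conj (tmul a c) = act ⁅a, c⁆ := by
  refine mul_right_cancel (b := act (c * a))
    (MulEquiv.toMonoidHom_injective (hom_ext fun b d => ?_))
  have hac : ⁅a, c⁆ * (c * a) = a * c := by rw [commutatorElement_def]; group
  simp only [MulEquiv.coe_toMonoidHom, MulAut.mul_apply, MulAut.conj_apply, ← map_mul, hac]
  rw [← act_mul_tmul_comm, mul_inv_cancel_right]

theorem conj_eq_act_comp_commutatorHom :
    (MulAut.conj : TensorSquare G →* MulAut (TensorSquare G)) = act.comp commutatorHom :=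
  hom_ext fun a c => by rw [conj_tmul, MonoidHom.comp_apply, commutatorHom_tmul]

theorem ker_commutatorHom_le_center :
    (commutatorHom : TensorSquare G →* G).ker ≤ Subgroup.center (TensorSquare G) := by
  intro t ht
  rw [Subgroup.mem_center_iff]
  intro s
  have h := congr($(conj_eq_act_comp_commutatorHom (G := G)) t s)
  rw [MonoidHom.comp_apply, ht, map_one, MulAut.one_apply, MulAut.conj_apply] at h
  exact (mul_inv_eq_iff_eq_mul.mp h).symm

instance [(Subgroup.center G).FiniteIndex] : (Subgroup.center (TensorSquare G)).FiniteIndex := by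
  have := finite_commutatorSet_of_finiteIndex_center (G := G)
  have : Finite (commutatorHom : TensorSquare G →* G).range := by
    rw [range_commutatorHom]; infer_instance
  exact Subgroup.finiteIndex_of_le ker_commutatorHom_le_center

theorem act_eq_one_of_mem_commutator (hT : ∀ u v : TensorSquare G, u * v = v * u) {c : G}
    (hc : c ∈ commutator G) : act c = 1 := by
  rw [← range_commutatorHom] at hc
  obtain ⟨t, rfl⟩ := hc
  rw [← MonoidHom.comp_apply, ← conj_eq_act_comp_commutatorHom]
  ext s
  rw [MulAut.conj_apply, hT t s, mul_inv_cancel_right, MulAut.one_apply]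

theorem tmul_pow_left {c : G} (hc : act c = 1) (k : G) (n : ℕ) :
    tmul (c ^ n) k = tmul c k ^ n := by
  induction n with
  | zero => rw [pow_zero, pow_zero, tmul_one_left]
  | succ n ih => rw [pow_succ', tmul_mul_left_eq_act, hc, MulAut.one_apply, ih, pow_succ]

theorem tmul_pow_right {c : G} (hc : act c = 1) (k : G) (n : ℕ) :
    tmul k (c ^ n) = tmul k c ^ n := by
  induction n with
  | zero => rw [pow_zero, pow_zero, tmul_one_right]
  | succ n ih => rw [pow_succ', tmul_mul_right_eq_act, hc, MulAut.one_apply, ih, pow_succ']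

theorem tmul_eq_one_of_mem_commutator [(Subgroup.center G).FiniteIndex]
    (hT : ∀ t : TensorSquare G, IsOfFinOrder t → t = 1) {c : G} (hc : c ∈ commutator G)
    (k : G) : tmul c k = 1 ∧ tmul k c = 1 := by
  have hact := act_eq_one_of_mem_commutator (mul_comm_of_finiteIndex_center hT) hc
  obtain ⟨n, hn, hcn⟩ := isOfFinOrder_iff_pow_eq_one.mp (isOfFinOrder_of_mem_commutator hc)
  constructor <;> refine hT _ (isOfFinOrder_iff_pow_eq_one.mpr ⟨n, hn, ?_⟩)
  · rw [← tmul_pow_left hact, hcn, tmul_one_left]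
  · rw [← tmul_pow_right hact, hcn, tmul_one_right]

theorem act_zpow_tmul_zpow (g : G) (a b c : ℤ) :
    act (g ^ a) (tmul (g ^ b) (g ^ c)) = tmul (g ^ b) (g ^ c) := by
  rw [act_tmul]; congr 1 <;> group

theorem tmul_zpow_left (g : G) (m n : ℤ) : tmul (g ^ m) (g ^ n) = tmul g (g ^ n) ^ m := by
  let F : Multiplicative ℤ →* TensorSquare G :=
    MonoidHom.mk' (fun a => tmul (g ^ a.toAdd) (g ^ n)) fun a b => by
      rw [toAdd_mul, add_comm, zpow_add, tmul_mul_left_eq_act, act_zpow_tmul_zpow]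
  simpa [F] using MonoidHom.apply_mint _ F (.ofAdd m)

theorem tmul_zpow_right (g : G) (m n : ℤ) : tmul (g ^ m) (g ^ n) = tmul (g ^ m) g ^ n := by
  let F : Multiplicative ℤ →* TensorSquare G :=
    MonoidHom.mk' (fun a => tmul (g ^ m) (g ^ a.toAdd)) fun a b => by
      rw [toAdd_mul, zpow_add, tmul_mul_right_eq_act, act_zpow_tmul_zpow]
  simpa [F] using MonoidHom.apply_mint _ F (.ofAdd n)

theorem tmul_zpow_zpow (g : G) (m n : ℤ) : tmul (g ^ m) (g ^ n) = tmul g g ^ (m * n) := by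
  have h := tmul_zpow_left g m 1
  rw [zpow_one] at h
  rw [tmul_zpow_right, h, zpow_mul]

theorem tmul_mul_left_of_forall_tmul_eq_one {c : G} (hc : ∀ k, tmul c k = 1) (a k : G) :
    tmul (a * c) k = tmul a k := by
  rw [tmul_mul_left_eq_act, hc, map_one, one_mul]

theorem tmul_mul_right_of_forall_tmul_eq_one {d : G} (hd : ∀ a, tmul a d = 1) (a b : G) :
    tmul a (b * d) = tmul a b := by
  rw [tmul_mul_right_eq_act, hd, map_one, mul_one]

def liftMul {R : Type v} [CommRing R] (φ : G →* Multiplicative R) :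
    TensorSquare G →* Multiplicative R :=
  lift (fun g h => .ofAdd ((φ g).toAdd * (φ h).toAdd))
    (fun _ _ _ => by simp only [map_mul, map_inv, toAdd_mul, toAdd_inv, ← ofAdd_add]; ring_nf)
    (fun _ _ _ => by simp only [map_mul, map_inv, toAdd_mul, toAdd_inv, ← ofAdd_add]; ring_nf)

@[simp]
theorem liftMul_tmul {R : Type v} [CommRing R] (φ : G →* Multiplicative R) (g h : G) :
    liftMul φ (tmul g h) = .ofAdd ((φ g).toAdd * (φ h).toAdd) :=
  lift_tmul _ _ _ _ _

section InfiniteCyclic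

variable (φ : G →* Multiplicative ℤ) {g₀ : G} (hg₀ : φ g₀ = .ofAdd 1)
  (hker : ∀ c ∈ φ.ker, ∀ k, tmul c k = 1 ∧ tmul k c = 1)
include hg₀ hker

theorem tmul_eq_zpow (g k : G) : tmul g k = tmul g₀ g₀ ^ ((φ g).toAdd * (φ k).toAdd) := by
  have hc : ∀ x : G, (g₀ ^ (φ x).toAdd)⁻¹ * x ∈ φ.ker := fun x => by
    rw [MonoidHom.mem_ker, map_mul, map_inv, map_zpow, hg₀, ← ofAdd_zsmul, smul_eq_mul, mul_one,
      ofAdd_toAdd, inv_mul_cancel]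
  calc tmul g k
      = tmul (g₀ ^ (φ g).toAdd * ((g₀ ^ (φ g).toAdd)⁻¹ * g))
          (g₀ ^ (φ k).toAdd * ((g₀ ^ (φ k).toAdd)⁻¹ * k)) := by
        simp only [mul_inv_cancel_left]
    _ = tmul (g₀ ^ (φ g).toAdd) (g₀ ^ (φ k).toAdd) := by
        rw [tmul_mul_left_of_forall_tmul_eq_one (fun k => (hker _ (hc g) k).1),
          tmul_mul_right_of_forall_tmul_eq_one (fun a => (hker _ (hc k) a).2)]
    _ = _ := tmul_zpow_zpow _ _ _

def mulEquivInt : TensorSquare G ≃* Multiplicative ℤ :=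
  (liftMul φ).toMulEquiv (zpowersHom _ (tmul g₀ g₀))
    (hom_ext fun g k => by
      rw [MonoidHom.comp_apply, liftMul_tmul, zpowersHom_apply, toAdd_ofAdd,
        ← tmul_eq_zpow φ hg₀ hker, MonoidHom.id_apply])
    (MonoidHom.ext_mint (by simp [hg₀]))

end InfiniteCyclic

theorem nonempty_mulEquiv_int_of_torsionFree [(Subgroup.center G).FiniteIndex]
    (e : Abelianization G ≃* Multiplicative ℤ)
    (hT : ∀ t : TensorSquare G, IsOfFinOrder t → t = 1) :
    Nonempty (TensorSquare G ≃* Multiplicative ℤ) := by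
  let φ : G →* Multiplicative ℤ := (e : Abelianization G →* Multiplicative ℤ).comp Abelianization.of
  have hker : φ.ker = commutator G := by
    rw [MonoidHom.ker_mulEquiv_comp, Abelianization.ker_of]
  obtain ⟨a, ha⟩ := e.surjective (.ofAdd 1)
  obtain ⟨g₀, rfl⟩ := QuotientGroup.mk_surjective a
  exact ⟨mulEquivInt φ ha fun c hc => tmul_eq_one_of_mem_commutator hT (hker ▸ hc)⟩

end TensorSquare

theorem tensorSquare_torsionFree_iff_general
    (A : Type v) (G : Type u) (H : Type w) [Group A] [Group G] [Group H]
    (i : A →* G) (π : G →* H)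
    (hπ : Function.Surjective π)
    (hker : π.ker = i.range) (hcent : i.range ≤ Subgroup.center G)
    (hH : Finite H)
    (hab : Nonempty (Abelianization G ≃* Multiplicative ℤ)) :
    (∀ t : TensorSquare G, IsOfFinOrder t → t = 1) ↔
      ((Nonempty (TensorSquare G ≃* Multiplicative ℤ) ∧ IsCyclic (TensorSquare H)) ∨
        Nonempty (TensorSquare G ≃* Multiplicative (ℤ × ℤ))) := by
  have : (Subgroup.center G).FiniteIndex := Subgroup.finiteIndex_of_le (hker ▸ hcent)
  constructor
  · intro hT
    obtain ⟨e⟩ := TensorSquare.nonempty_mulEquiv_int_of_torsionFree hab.some hT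
    have : IsCyclic (TensorSquare G) := e.isCyclic.mpr inferInstance
    exact .inl ⟨⟨e⟩, isCyclic_of_surjective _ (TensorSquare.map_surjective hπ)⟩
  · rintro (⟨⟨e⟩, -⟩ | ⟨⟨e⟩⟩) <;>
      have := Function.Injective.isMulTorsionFree e.toMonoidHom e.injective <;>
      exact fun t ht => ht.eq_one'

/-- For a central extension `1 → A → G → H → 1` with `H` finite,
`G_ab ≅ ℤ` and `A ≅ ℤ`, the tensor square `G ⊗ G` is torsion-free if and only if
either `G ⊗ G ≅ ℤ` and `H ⊗ H` is cyclic, or `G ⊗ G ≅ ℤ ⊕ ℤ`. -/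
theorem tensorSquare_torsionFree_iff
    (A : Type v) (G : Type u) (H : Type w) [Group A] [Group G] [Group H]
    (i : A →* G) (π : G →* H)
    (hi : Function.Injective i) (hπ : Function.Surjective π)
    (hker : π.ker = i.range) (hcent : i.range ≤ Subgroup.center G)
    (hH : Finite H)
    (hab : Nonempty (Abelianization G ≃* Multiplicative ℤ))
    (hA : Nonempty (A ≃* Multiplicative ℤ)) :
    (∀ t : TensorSquare G, IsOfFinOrder t → t = 1) ↔
      ((Nonempty (TensorSquare G ≃* Multiplicative ℤ) ∧ IsCyclic (TensorSquare H)) ∨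
        Nonempty (TensorSquare G ≃* Multiplicative (ℤ × ℤ))) :=
  tensorSquare_torsionFree_iff_general A G H i π hπ hker hcent hH hab
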